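/- Weighted local-energy inequality (Eq. (15)): Let B ⊆ V with λ_B > 0, and suppose P_B satisfies the density-ratio condition with parameter b ∈ ℝ. Then for any measurable f with f(J) ≥ 0 and f(flip_B J) = f(J) for all J, one has E[ −f(J) J_B ⟨σ_B⟩_J ] ≥ E[ −f(J) J_B ( tanh(βλ_B J_B) + (1 − exp(−b J_B)) / sinh(2βλ_B J_B) ) ], where the function J_B ↦ (1 − exp(−b J_B))/sinh(2βλ_B J_B) is interpreted by its continuous extension b/(2βλ_B) at J_B = 0. -/

import Mathlib

open MeasureTheory Real

variable {V : Type*}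

/-- Spin value of a configuration at a site: `+1` or `-1`. -/
noncomputable def spin (σ : V → Bool) (i : V) : ℝ := if σ i then 1 else -1

/-- `σ_A = ∏_{i ∈ A} σ_i`. -/
noncomputable def sigmaA (A : Finset V) (σ : V → Bool) : ℝ := ∏ i ∈ A, spin σ i

/-- `β Σ_A λ_A J_A σ_A` (minus the Hamiltonian, times β). -/
noncomputable def energy [Fintype V] [DecidableEq V] (β : ℝ) (lam J : Finset V → ℝ)
    (σ : V → Bool) : ℝ := β * ∑ A : Finset V, lam A * J A * sigmaA A σ

/-- Partition function `Z_J`. -/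
noncomputable def Zfun [Fintype V] [DecidableEq V] (β : ℝ) (lam J : Finset V → ℝ) : ℝ :=
  ∑ σ : V → Bool, Real.exp (energy β lam J σ)

/-- Gibbs expectation `⟨σ_B⟩_J`. -/
noncomputable def corr [Fintype V] [DecidableEq V] (β : ℝ) (lam J : Finset V → ℝ)
    (B : Finset V) : ℝ :=
  (∑ σ : V → Bool, sigmaA B σ * Real.exp (energy β lam J σ)) / Zfun β lam J

/-- Gibbs expectation `⟨σ_B σ_C⟩_J`. -/
noncomputable def corr2 [Fintype V] [DecidableEq V] (β : ℝ) (lam J : Finset V → ℝ)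
    (B C : Finset V) : ℝ :=
  (∑ σ : V → Bool, sigmaA B σ * sigmaA C σ * Real.exp (energy β lam J σ)) / Zfun β lam J

/-- Negate the coupling indexed by `B`. -/
noncomputable def flipJ [DecidableEq V] (B : Finset V) (J : Finset V → ℝ) : Finset V → ℝ :=
  Function.update J B (-(J B))

/-- The density-ratio condition `P(-x) = exp(-2 b x) P(x)`: the pushforward of `P` under
negation equals the measure with density `x ↦ exp (-2 b x)` with respect to `P`. -/
def densityRatio (P : Measure ℝ) (b : ℝ) : Prop :=
  P.map (fun x => -x) = P.withDensity (fun x => ENNReal.ofReal (Real.exp (-2 * b * x)))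

/-- `(1 - exp (-b x)) / sinh (2 β λ_B x)`, extended continuously by `b / (2 β λ_B)` at `x = 0`. -/
noncomputable def phiExt (β lamB b x : ℝ) : ℝ :=
  if x = 0 then b / (2 * β * lamB)
  else (1 - Real.exp (-b * x)) / Real.sinh (2 * β * lamB * x)

/-!
Write `x = J_B`, `t = tanh (β λ_B x)` and let `u` be `⟨σ_B⟩` at `J_B = 0`. Since `σ_B = ±1`,
`exp (β λ_B x σ_B) = cosh (β λ_B x) (1 + t σ_B)`, so `⟨σ_B⟩_J = (u + t) / (1 + u t)`; flipping `J_B`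
replaces `t` by `-t`. By the density-ratio condition, flipping `J_B` maps the product measure to
itself with density `ρ J = exp (-2 b J_B)`, so `E[F] = E[ρ · F ∘ flip_B]` for every `F`, and it
suffices to compare the integrands after adding `ρ · (· ∘ flip_B)` to both. With `c = exp (-b x)`
the symmetrized difference is `f(J) · x t (1 - t²) ((c + 1) u t + c - 1)² / (2 t² (1 - u² t²))`,
which is nonnegative because `x t > 0`, `|t| < 1` and `|u| ≤ 1`.
-/

open scoped ENNReal

theorem lintegral_pi_prod {ι : Type*} [Fintype ι] {Ω : ι → Type*} [∀ i, MeasurableSpace (Ω i)]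
    (μ : ∀ i, Measure (Ω i)) [∀ i, IsProbabilityMeasure (μ i)] {h : ∀ i, Ω i → ℝ≥0∞}
    (hh : ∀ i, Measurable (h i)) :
    ∫⁻ x, ∏ i, h i (x i) ∂Measure.pi μ = ∏ i, ∫⁻ y, h i y ∂μ i := by
  rw [ProbabilityTheory.lintegral_prod_eq_prod_lintegral_of_indepFun _ _
    (ProbabilityTheory.iIndepFun_pi fun i => (hh i).aemeasurable)
    fun i => (hh i).comp (measurable_pi_apply i)]
  exact Finset.prod_congr rfl fun i _ => (measurePreserving_eval μ i).lintegral_comp (hh i)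

theorem pi_withDensity {ι : Type*} [Fintype ι] {Ω : ι → Type*} [∀ i, MeasurableSpace (Ω i)]
    (μ : ∀ i, Measure (Ω i)) [∀ i, IsProbabilityMeasure (μ i)] {f : ∀ i, Ω i → ℝ≥0∞}
    (hf : ∀ i, Measurable (f i)) [∀ i, SigmaFinite ((μ i).withDensity (f i))] :
    Measure.pi (fun i => (μ i).withDensity (f i))
      = (Measure.pi μ).withDensity (fun x => ∏ i, f i (x i)) := by
  refine Measure.pi_eq fun s hs => ?_
  have hbox : (Set.univ.pi s).indicator (fun x => ∏ i, f i (x i))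
      = fun x => ∏ i, (s i).indicator (f i) (x i) := by
    funext x
    by_cases hx : x ∈ Set.univ.pi s
    · rw [Set.indicator_of_mem hx]
      exact Finset.prod_congr rfl fun i _ => (Set.indicator_of_mem (hx i trivial) _).symm
    · obtain ⟨i, hi⟩ : ∃ i, x i ∉ s i := by simpa using hx
      rw [Set.indicator_of_notMem hx,
        Finset.prod_eq_zero (Finset.mem_univ i) (Set.indicator_of_notMem hi _)]
  rw [eq_comm, withDensity_apply _ (.univ_pi hs), ← lintegral_indicator (.univ_pi hs), hbox,
    lintegral_pi_prod μ fun i => (hf i).indicator (hs i)]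
  exact Finset.prod_congr rfl fun i _ => by
    rw [lintegral_indicator (hs i), withDensity_apply _ (hs i)]

section Involution

variable {α : Type*} [MeasurableSpace α] {μ : Measure α} {e : α → α} {ρ : α → ℝ}

theorem Function.Involutive.measurableEmbedding (he : Function.Involutive e)
    (he_meas : Measurable e) : MeasurableEmbedding e :=
  (MeasurableEquiv.ofInvolutive e he he_meas).measurableEmbedding

theorem integral_mul_comp_of_map_eq_withDensity (he : Function.Involutive e)
    (he_meas : Measurable e) (hρ : Measurable ρ) (hρ0 : ∀ x, 0 ≤ ρ x)
    (hmap : μ.map e = μ.withDensity (fun x => ENNReal.ofReal (ρ x))) (F : α → ℝ) :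
    ∫ x, ρ x * F (e x) ∂μ = ∫ x, F x ∂μ := by
  change μ.map e = μ.withDensity (fun x => ((ρ x).toNNReal : ℝ≥0∞)) at hmap
  calc ∫ x, ρ x * F (e x) ∂μ = ∫ x, F (e x) ∂(μ.map e) := by
        rw [hmap, integral_withDensity_eq_integral_smul hρ.real_toNNReal]
        simp only [NNReal.smul_def, Real.coe_toNNReal _ (hρ0 _), smul_eq_mul]
    _ = ∫ x, F x ∂μ := by
        rw [(he.measurableEmbedding he_meas).integral_map]
        simp [he _]

theorem integrable_mul_comp_of_map_eq_withDensity (he : Function.Involutive e)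
    (he_meas : Measurable e) (hρ : Measurable ρ) (hρ0 : ∀ x, 0 ≤ ρ x)
    (hmap : μ.map e = μ.withDensity (fun x => ENNReal.ofReal (ρ x))) {F : α → ℝ}
    (hF : Integrable F μ) : Integrable (fun x => ρ x * F (e x)) μ := by
  change μ.map e = μ.withDensity (fun x => ((ρ x).toNNReal : ℝ≥0∞)) at hmap
  have h : Integrable (fun x => F (e x)) (μ.map e) := by
    rw [(he.measurableEmbedding he_meas).integrable_map_iff]
    simpa [Function.comp_def, he _] using hF
  rw [hmap, integrable_withDensity_iff_integrable_smul hρ.real_toNNReal] at h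
  simpa only [NNReal.smul_def, Real.coe_toNNReal _ (hρ0 _), smul_eq_mul] using h

theorem integral_le_integral_of_involution (he : Function.Involutive e)
    (he_meas : Measurable e) (hρ : Measurable ρ) (hρ0 : ∀ x, 0 ≤ ρ x)
    (hmap : μ.map e = μ.withDensity (fun x => ENNReal.ofReal (ρ x))) {T G : α → ℝ}
    (hT : Integrable T μ) (hG : Integrable G μ)
    (h : ∀ x, T x + ρ x * T (e x) ≤ G x + ρ x * G (e x)) :
    ∫ x, T x ∂μ ≤ ∫ x, G x ∂μ := by
  have hTe := integrable_mul_comp_of_map_eq_withDensity he he_meas hρ hρ0 hmap hT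
  have hGe := integrable_mul_comp_of_map_eq_withDensity he he_meas hρ hρ0 hmap hG
  have hsum : ∫ x, (T x + ρ x * T (e x)) ∂μ ≤ ∫ x, (G x + ρ x * G (e x)) ∂μ :=
    integral_mono (hT.add hTe) (hG.add hGe) h
  rw [integral_add hT hTe, integral_add hG hGe,
    integral_mul_comp_of_map_eq_withDensity he he_meas hρ hρ0 hmap,
    integral_mul_comp_of_map_eq_withDensity he he_meas hρ hρ0 hmap] at hsum
  linarith

end Involution

theorem exp_mul_eq_cosh_mul_tanh {s : ℝ} (hs : s = 1 ∨ s = -1) (y : ℝ) :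
    Real.exp (y * s) = Real.cosh y * (1 + s * Real.tanh y) := by
  have hcosh : Real.cosh y ≠ 0 := (Real.cosh_pos y).ne'
  rcases hs with rfl | rfl
  · rw [mul_one, ← Real.cosh_add_sinh, Real.tanh_eq_sinh_div_cosh]; field_simp
  · rw [mul_neg_one, ← Real.cosh_sub_sinh, Real.tanh_eq_sinh_div_cosh]; field_simp; ring

theorem tilted_mean_eq {ι : Type*} [Fintype ι] {s w : ι → ℝ} (hs : ∀ i, s i = 1 ∨ s i = -1)
    (hw : ∑ i, w i ≠ 0) (y : ℝ) :
    (∑ i, s i * (Real.exp (y * s i) * w i)) / ∑ i, Real.exp (y * s i) * w i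
      = ((∑ i, s i * w i) / (∑ i, w i) + Real.tanh y)
        / (1 + (∑ i, s i * w i) / (∑ i, w i) * Real.tanh y) := by
  have hsq : ∀ i, s i * s i = 1 := fun i => by rcases hs i with h | h <;> simp [h]
  have hnum : ∑ i, s i * (Real.exp (y * s i) * w i)
      = Real.cosh y * (∑ i, s i * w i + Real.tanh y * ∑ i, w i) := by
    simp only [exp_mul_eq_cosh_mul_tanh (hs _), Finset.mul_sum, ← Finset.sum_add_distrib]
    refine Finset.sum_congr rfl fun i _ => ?_
    linear_combination Real.cosh y * Real.tanh y * w i * hsq i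
  have hden : ∑ i, Real.exp (y * s i) * w i
      = Real.cosh y * (∑ i, w i + Real.tanh y * ∑ i, s i * w i) := by
    simp only [exp_mul_eq_cosh_mul_tanh (hs _), Finset.mul_sum, ← Finset.sum_add_distrib]
    exact Finset.sum_congr rfl fun i _ => by ring
  rw [hnum, hden, mul_div_mul_left _ _ (Real.cosh_pos y).ne', ← div_div_div_cancel_right₀ hw]
  congr 1 <;> field_simp

theorem sinh_two_mul_eq_tanh (y : ℝ) :
    Real.sinh (2 * y) = 2 * Real.tanh y / (1 - Real.tanh y ^ 2) := by
  have hcosh : Real.cosh y ≠ 0 := (Real.cosh_pos y).ne'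
  rw [Real.sinh_two_mul, Real.tanh_eq_sinh_div_cosh]
  field_simp
  rw [Real.cosh_sq]
  ring

theorem mul_tanh_mean_gap_le (x t u c : ℝ) (hxt : 0 < x * t) (ht : |t| < 1) (hu : |u| ≤ 1)
    (hc : c ≠ 0) :
    x * ((u + t) / (1 + u * t) - c ^ 2 * ((u - t) / (1 - u * t)))
      ≤ x * (t + (1 - c) / (2 * t / (1 - t ^ 2))
          + c ^ 2 * (t - (1 - c⁻¹) / -(2 * t / (1 - t ^ 2)))) := by
  have ht0 : t ≠ 0 := by rintro rfl; simp at hxt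
  have h1t : 0 < 1 - t ^ 2 := by nlinarith [sq_abs t, abs_nonneg t]
  have hut : |u * t| < 1 := by
    rw [abs_mul]; nlinarith [abs_nonneg u, abs_nonneg t]
  have hm : 0 < 1 - u * t := by linarith [le_abs_self (u * t)]
  have hp : 0 < 1 + u * t := by linarith [neg_abs_le (u * t)]
  have hgap : x * (t + (1 - c) / (2 * t / (1 - t ^ 2))
          + c ^ 2 * (t - (1 - c⁻¹) / -(2 * t / (1 - t ^ 2))))
        - x * ((u + t) / (1 + u * t) - c ^ 2 * ((u - t) / (1 - u * t)))
      = x * t * (1 - t ^ 2) * ((c + 1) * (u * t) + c - 1) ^ 2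
        / (2 * t ^ 2 * ((1 - u * t) * (1 + u * t))) := by
    have : 1 - t * u ≠ 0 := by rw [mul_comm]; exact hm.ne'
    have : 1 + t * u ≠ 0 := by rw [mul_comm]; exact hp.ne'
    have := h1t.ne'
    field_simp
    ring
  have hnonneg : 0 ≤ x * t * (1 - t ^ 2) * ((c + 1) * (u * t) + c - 1) ^ 2
      / (2 * t ^ 2 * ((1 - u * t) * (1 + u * t))) := by
    have := mul_pos hm hp
    positivity
  linarith

theorem mul_tanh_mul_pos {θ x : ℝ} (hθ : 0 < θ) (hx : x ≠ 0) : 0 < x * Real.tanh (θ * x) := by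
  rw [Real.tanh_eq_sinh_div_cosh, ← mul_div_assoc]
  refine div_pos ?_ (Real.cosh_pos _)
  rcases hx.lt_or_gt with h | h
  · exact mul_pos_of_neg_of_neg h (Real.sinh_neg_iff.2 (mul_neg_of_pos_of_neg hθ h))
  · exact mul_pos h (Real.sinh_pos_iff.2 (mul_pos hθ h))

theorem mul_tanh_mean_gap_le_phiExt (β lamB b x u : ℝ) (hθ : 0 < β * lamB) (hu : |u| ≤ 1) :
    x * ((u + Real.tanh (β * lamB * x)) / (1 + u * Real.tanh (β * lamB * x))
        - Real.exp (-2 * b * x)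
          * ((u + Real.tanh (β * lamB * -x)) / (1 + u * Real.tanh (β * lamB * -x))))
      ≤ x * (Real.tanh (β * lamB * x) + phiExt β lamB b x
        - Real.exp (-2 * b * x) * (Real.tanh (β * lamB * -x) + phiExt β lamB b (-x))) := by
  rcases eq_or_ne x 0 with rfl | hx
  · simp
  have hφ : phiExt β lamB b x = (1 - Real.exp (-b * x))
      / (2 * Real.tanh (β * lamB * x) / (1 - Real.tanh (β * lamB * x) ^ 2)) := by
    rw [phiExt, if_neg hx, ← sinh_two_mul_eq_tanh]; ring_nf
  have hφ' : phiExt β lamB b (-x) = (1 - (Real.exp (-b * x))⁻¹)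
      / -(2 * Real.tanh (β * lamB * x) / (1 - Real.tanh (β * lamB * x) ^ 2)) := by
    rw [phiExt, if_neg (neg_ne_zero.2 hx), ← sinh_two_mul_eq_tanh, ← Real.sinh_neg,
      ← Real.exp_neg]
    ring_nf
  have hρ : Real.exp (-2 * b * x) = Real.exp (-b * x) ^ 2 := by
    rw [← Real.exp_nat_mul]; ring_nf
  rw [hφ, hφ', hρ, mul_neg, Real.tanh_neg]
  convert mul_tanh_mean_gap_le x _ u (Real.exp (-b * x)) (mul_tanh_mul_pos hθ hx)
    (Real.abs_tanh_lt_one _) hu (Real.exp_pos _).ne' using 2 <;> ring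

theorem sigmaA_eq_one_or_neg_one (A : Finset V) (σ : V → Bool) :
    sigmaA A σ = 1 ∨ sigmaA A σ = -1 :=
  Finset.prod_induction _ (fun x : ℝ => x = 1 ∨ x = -1)
    (by rintro a b (rfl | rfl) (rfl | rfl) <;> norm_num) (Or.inl rfl)
    fun i _ => by unfold spin; split_ifs <;> simp

section Spin

variable [Fintype V] [DecidableEq V]

theorem Zfun_pos (β : ℝ) (lam J : Finset V → ℝ) : 0 < Zfun β lam J :=
  Finset.sum_pos (fun _ _ => Real.exp_pos _) Finset.univ_nonempty

theorem abs_corr_le_one (β : ℝ) (lam J : Finset V → ℝ) (B : Finset V) :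
    |corr β lam J B| ≤ 1 := by
  rw [corr, abs_div, abs_of_pos (Zfun_pos β lam J), div_le_one (Zfun_pos β lam J)]
  refine (Finset.abs_sum_le_sum_abs _ _).trans (Finset.sum_le_sum fun σ _ => ?_)
  rcases sigmaA_eq_one_or_neg_one B σ with h | h <;> simp [h]

theorem energy_update (β : ℝ) (lam J : Finset V → ℝ) (B : Finset V) (x : ℝ) (σ : V → Bool) :
    energy β lam (Function.update J B x) σ
      = β * lam B * x * sigmaA B σ + energy β lam (Function.update J B 0) σ := by
  have hrest : ∀ y, ∑ A ∈ {B}ᶜ, lam A * Function.update J B y A * sigmaA A σ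
      = ∑ A ∈ {B}ᶜ, lam A * J A * sigmaA A σ := fun y =>
    Finset.sum_congr rfl fun A hA => by
      rw [Function.update_of_ne (by simpa using hA)]
  simp only [energy, Fintype.sum_eq_add_sum_compl B, Function.update_self, hrest]
  ring

theorem corr_update (β : ℝ) (lam J : Finset V → ℝ) (B : Finset V) (x : ℝ) :
    corr β lam (Function.update J B x) B
      = (corr β lam (Function.update J B 0) B + Real.tanh (β * lam B * x))
        / (1 + corr β lam (Function.update J B 0) B * Real.tanh (β * lam B * x)) := by
  simp only [corr, Zfun, energy_update β lam J B x, Real.exp_add]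
  exact tilted_mean_eq (fun σ => sigmaA_eq_one_or_neg_one B σ) (Zfun_pos β lam _).ne' _

end Spin

section Flip

variable [DecidableEq V]

theorem flipJ_involutive (B : Finset V) : Function.Involutive (flipJ B) := fun J => by
  simp [flipJ]

theorem flipJ_eq_pi_map (B : Finset V) :
    flipJ B = fun J A => (if A = B then Neg.neg else id) (J A) := by
  funext J A
  by_cases hA : A = B
  · subst hA; simp [flipJ]
  · simp [flipJ, hA]

theorem measurable_flipJ (B : Finset V) : Measurable (flipJ B) := by
  rw [flipJ_eq_pi_map]
  refine measurable_pi_lambda _ fun A => ?_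
  split_ifs
  · exact (measurable_pi_apply A).neg
  · exact measurable_pi_apply A

theorem map_flipJ_pi [Fintype V] (P : Finset V → Measure ℝ) [∀ A, IsProbabilityMeasure (P A)]
    {B : Finset V} {b : ℝ} (hPB : densityRatio (P B) b) :
    (Measure.pi P).map (flipJ B)
      = (Measure.pi P).withDensity (fun J => ENNReal.ofReal (Real.exp (-2 * b * J B))) := by
  set w : Finset V → ℝ → ℝ := fun A x => if A = B then Real.exp (-2 * b * x) else 1
  have hcoord : ∀ A, (P A).map (if A = B then Neg.neg else id)
      = (P A).withDensity (fun x => ENNReal.ofReal (w A x)) := by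
    intro A
    by_cases hA : A = B
    · subst hA
      simp only [w, ↓reduceIte]
      exact hPB
    · simp [w, hA]
  have : ∀ A, SigmaFinite ((P A).map (if A = B then Neg.neg else id)) := fun A => by
    rw [hcoord A]; infer_instance
  rw [flipJ_eq_pi_map, Measure.pi_map_pi fun A => by split_ifs <;> fun_prop]
  simp_rw [hcoord]
  rw [pi_withDensity P fun A => by simp only [w]; split_ifs <;> fun_prop]
  congr with J
  rw [← ENNReal.ofReal_prod_of_nonneg fun A _ => by positivity, Fintype.prod_eq_single B]
  · simp [w]
  · intro A hA; simp [w, hA]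

end Flip

theorem localEnergy_add_flip_le [Fintype V] [DecidableEq V] {β : ℝ} {lam : Finset V → ℝ}
    {B : Finset V} (hθ : 0 < β * lam B) (b : ℝ) {f : (Finset V → ℝ) → ℝ} (hf0 : ∀ J, 0 ≤ f J)
    (hfflip : ∀ J, f (flipJ B J) = f J) (J : Finset V → ℝ) :
    -(f J) * J B * (Real.tanh (β * lam B * J B) + phiExt β (lam B) b (J B))
        + Real.exp (-2 * b * J B) * (-(f (flipJ B J)) * flipJ B J B
          * (Real.tanh (β * lam B * flipJ B J B) + phiExt β (lam B) b (flipJ B J B)))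
      ≤ -(f J) * J B * corr β lam J B
        + Real.exp (-2 * b * J B)
          * (-(f (flipJ B J)) * flipJ B J B * corr β lam (flipJ B J) B) := by
  have hflipB : flipJ B J B = -J B := by simp [flipJ]
  have hcorr : corr β lam J B
      = (corr β lam (Function.update J B 0) B + Real.tanh (β * lam B * J B))
        / (1 + corr β lam (Function.update J B 0) B * Real.tanh (β * lam B * J B)) := by
    simpa using corr_update β lam J B (J B)
  rw [hfflip, hflipB, hcorr, flipJ, corr_update β lam J B (-J B)]
  have hgap := mul_tanh_mean_gap_le_phiExt β (lam B) b (J B) _ hθ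
    (abs_corr_le_one β lam (Function.update J B 0) B)
  linear_combination mul_le_mul_of_nonneg_left hgap (hf0 J)

theorem weighted_local_energy_inequality_general [Fintype V] [DecidableEq V]
    (β : ℝ) (hβ : 0 < β) (lam : Finset V → ℝ)
    (P : Finset V → Measure ℝ) [∀ A, IsProbabilityMeasure (P A)]
    (B : Finset V) (hlamB : 0 < lam B) (b : ℝ) (hPB : densityRatio (P B) b)
    (f : (Finset V → ℝ) → ℝ)
    (hf0 : ∀ J, 0 ≤ f J)
    (hfflip : ∀ J, f (flipJ B J) = f J)
    (hint1 : Integrable (fun J => -(f J) * J B * corr β lam J B) (Measure.pi P))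
    (hint2 : Integrable (fun J => -(f J) * J B *
      (Real.tanh (β * lam B * J B) + phiExt β (lam B) b (J B))) (Measure.pi P)) :
    ∫ J, -(f J) * J B *
        (Real.tanh (β * lam B * J B) + phiExt β (lam B) b (J B)) ∂(Measure.pi P) ≤
      ∫ J, -(f J) * J B * corr β lam J B ∂(Measure.pi P) :=
  integral_le_integral_of_involution (flipJ_involutive B) (measurable_flipJ B)
    (by fun_prop) (fun _ => (Real.exp_pos _).le) (map_flipJ_pi P hPB) hint2 hint1
    (localEnergy_add_flip_le (mul_pos hβ hlamB) b hf0 hfflip)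

/-- Weighted local-energy inequality (Eq. (15)). -/
theorem weighted_local_energy_inequality [Fintype V] [DecidableEq V]
    (β : ℝ) (hβ : 0 < β) (lam : Finset V → ℝ)
    (P : Finset V → Measure ℝ) [∀ A, IsProbabilityMeasure (P A)]
    (B : Finset V) (hlamB : 0 < lam B) (b : ℝ) (hPB : densityRatio (P B) b)
    (f : (Finset V → ℝ) → ℝ) (hf : Measurable f)
    (hf0 : ∀ J, 0 ≤ f J)
    (hfflip : ∀ J, f (flipJ B J) = f J)
    (hint1 : Integrable (fun J => -(f J) * J B * corr β lam J B) (Measure.pi P))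
    (hint2 : Integrable (fun J => -(f J) * J B *
      (Real.tanh (β * lam B * J B) + phiExt β (lam B) b (J B))) (Measure.pi P)) :
    ∫ J, -(f J) * J B *
        (Real.tanh (β * lam B * J B) + phiExt β (lam B) b (J B)) ∂(Measure.pi P) ≤
      ∫ J, -(f J) * J B * corr β lam J B ∂(Measure.pi P) :=
  weighted_local_energy_inequality_general β hβ lam P B hlamB b hPB f hf0 hfflip hint1 hint2
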